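/- Let R be a commutative ring with a distinguished invertible element q^{1/2} (write q = (q^{1/2})^2), let Q be an antisymmetric r×r integer matrix, and let N be a positive integer. Then there is an injective R-algebra homomorphism Φ_N : T(N²Q) → T(Q), called the N-th Frobenius homomorphism, determined by Φ_N(x_i) = x_i^N for i = 1, …, r, where T(N²Q) is the quantum torus associated to the antisymmetric matrix N²Q. -/

import Mathlib

open scoped BigOperators Matrix

/-- Defining relations of the quantum torus `T(Q)` over a commutative ring `R`
with distinguished invertible element `sqq = q^{1/2}` (so `q = sqq^2`):
generators `x_i = ι (Sum.inl i)` and their inverses `x_i⁻¹ = ι (Sum.inr i)`,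
relations `x_i x_i⁻¹ = x_i⁻¹ x_i = 1` and `x_i x_j = q^{Q i j} x_j x_i`. -/
inductive QTRel (R : Type) [CommRing R] (sqq : Rˣ) {r : ℕ} (Q : Matrix (Fin r) (Fin r) ℤ) :
    FreeAlgebra R (Fin r ⊕ Fin r) → FreeAlgebra R (Fin r ⊕ Fin r) → Prop
  | mul_inv (i : Fin r) :
      QTRel R sqq Q (FreeAlgebra.ι R (Sum.inl i) * FreeAlgebra.ι R (Sum.inr i)) 1
  | inv_mul (i : Fin r) :
      QTRel R sqq Q (FreeAlgebra.ι R (Sum.inr i) * FreeAlgebra.ι R (Sum.inl i)) 1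
  | qcomm (i j : Fin r) :
      QTRel R sqq Q (FreeAlgebra.ι R (Sum.inl i) * FreeAlgebra.ι R (Sum.inl j))
        (((sqq ^ (2 * Q i j) : Rˣ) : R) •
          (FreeAlgebra.ι R (Sum.inl j) * FreeAlgebra.ι R (Sum.inl i)))

/-- The quantum torus `T(Q)`. -/
def QuantumTorus (R : Type) [CommRing R] (sqq : Rˣ) {r : ℕ}
    (Q : Matrix (Fin r) (Fin r) ℤ) : Type :=
  RingQuot (QTRel R sqq Q)

noncomputable instance (R : Type) [CommRing R] (sqq : Rˣ) {r : ℕ}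
    (Q : Matrix (Fin r) (Fin r) ℤ) : Ring (QuantumTorus R sqq Q) :=
  inferInstanceAs (Ring (RingQuot (QTRel R sqq Q)))

noncomputable instance (R : Type) [CommRing R] (sqq : Rˣ) {r : ℕ}
    (Q : Matrix (Fin r) (Fin r) ℤ) : Algebra R (QuantumTorus R sqq Q) :=
  inferInstanceAs (Algebra R (RingQuot (QTRel R sqq Q)))

namespace QuantumTorus

variable {R : Type} [CommRing R] (sqq : Rˣ) {r : ℕ} (Q : Matrix (Fin r) (Fin r) ℤ)

/-- The generator `x_i` of the quantum torus. -/
noncomputable def X (i : Fin r) : QuantumTorus R sqq Q :=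
  RingQuot.mkAlgHom R (QTRel R sqq Q) (FreeAlgebra.ι R (Sum.inl i))

/-- The inverse generator `x_i⁻¹` of the quantum torus. -/
noncomputable def Xinv (i : Fin r) : QuantumTorus R sqq Q :=
  RingQuot.mkAlgHom R (QTRel R sqq Q) (FreeAlgebra.ι R (Sum.inr i))

/-- `x_i^k` for `k : ℤ`, using the inverse generator for negative powers. -/
noncomputable def genPow (i : Fin r) (k : ℤ) : QuantumTorus R sqq Q :=
  if 0 ≤ k then X sqq Q i ^ k.toNat else Xinv sqq Q i ^ (-k).toNat

end QuantumTorus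

/-- The pairing `⟨k,k'⟩_Q = ∑_{i,j} Q i j * k i * k' j`. -/
def quantumPairing {r : ℕ} (Q : Matrix (Fin r) (Fin r) ℤ) (k k' : Fin r → ℤ) : ℤ :=
  ∑ i, ∑ j, Q i j * k i * k' j

/-- The sum `∑_{i<j} Q i j * k i * k j` used to normalize monomials. -/
def quantumUpperSum {r : ℕ} (Q : Matrix (Fin r) (Fin r) ℤ) (k : Fin r → ℤ) : ℤ :=
  ∑ i, ∑ j, if i < j then Q i j * k i * k j else 0

/-- The normalized monomial
`x^k = q^{-(1/2) ∑_{i<j} Q i j k_i k_j} x_1^{k_1} ⋯ x_r^{k_r}`. -/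
noncomputable def QuantumTorus.monomial {R : Type} [CommRing R] (sqq : Rˣ) {r : ℕ}
    (Q : Matrix (Fin r) (Fin r) ℤ) (k : Fin r → ℤ) : QuantumTorus R sqq Q :=
  ((sqq ^ (-(quantumUpperSum Q k)) : Rˣ) : R) •
    ((List.finRange r).map (fun i => QuantumTorus.genPow sqq Q i (k i))).prod

/-!
The ordered monomials `x^k = x_1^{k_1} ⋯ x_r^{k_r}` (`k ∈ ℤ^r`) span `T(Q)`: multiplying one on
the left by `x_i^{±1}` commutes `x_i^{±1}` past the other factors, which only costs a power of
`q^{1/2}`. They are linearly independent because `T(Q)` acts on the free module `R[ℤ^r]` with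
`x_i e_k = (q^{1/2})^{(B k)_i} e_{k + e_i}`, where `B` is the strictly lower-triangular matrix with
`B - Bᵀ = 2Q`; under this action `x^k e_0 = e_k`. So the ordered monomials form a basis of `T(Q)`.
The Frobenius map, obtained from the universal property of `T(N²Q)`, sends `x^k` to `x^{N k}`, i.e.
maps a basis of `T(N²Q)` onto a linearly independent family of `T(Q)`, hence is injective.
-/

section QCommuting

variable {G : Type*} [Group G] {a b c : G}

theorem mul_zpow_eq_of_mul_eq (hc : Commute c b) (h : a * b = c * (b * a)) (n : ℤ) :
    a * b ^ n = c ^ n * (b ^ n * a) := by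
  have hconj : a * b * a⁻¹ = c * b := by rw [h, ← mul_assoc, mul_inv_cancel_right]
  have := congrArg (· ^ n) hconj
  simp only [conj_zpow, hc.mul_zpow] at this
  rw [← mul_assoc, ← this, inv_mul_cancel_right]

theorem zpow_mul_zpow_eq_of_mul_eq (hca : Commute c a) (hcb : Commute c b)
    (h : a * b = c * (b * a)) (m n : ℤ) :
    a ^ m * b ^ n = c ^ (m * n) * (b ^ n * a ^ m) := by
  have hba : b ^ n * a = c⁻¹ ^ n * (a * b ^ n) := by
    rw [mul_zpow_eq_of_mul_eq hcb h, inv_zpow, inv_mul_cancel_left]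
  rw [mul_zpow_eq_of_mul_eq (hca.inv_left.zpow_left n) hba m, ← mul_assoc, ← zpow_mul,
    inv_zpow', ← zpow_add, mul_comm m n, add_neg_cancel, zpow_zero, one_mul]

end QCommuting

theorem Units.val_zpow_mul_val_zpow_of_mul_eq_smul {R A : Type*} [CommRing R] [Ring A]
    [Algebra R A] {u v : Aˣ} {c : Rˣ} (h : (u : A) * v = c • ((v : A) * u)) (m n : ℤ) :
    ((u ^ m : Aˣ) : A) * ↑(v ^ n) = c ^ (m * n) • (((v ^ n : Aˣ) : A) * ↑(u ^ m)) := by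
  let ι : Rˣ →* Aˣ := Units.map (algebraMap R A : R →* A)
  have hsmul (d : Rˣ) (x : A) : d • x = (ι d : A) * x := Algebra.smul_def (d : R) x
  have hcentral (g : Aˣ) : Commute (ι c) g := Units.ext (Algebra.commutes (c : R) (g : A))
  have h' : u * v = ι c * (v * u) := Units.ext (by rw [Units.val_mul, h, hsmul]; rfl)
  rw [hsmul, map_zpow, ← Units.val_mul, ← Units.val_mul,
    zpow_mul_zpow_eq_of_mul_eq (hcentral u) (hcentral v) h' m n]
  rfl

namespace QuantumTorus

variable {R : Type} [CommRing R] (sqq : Rˣ) {r : ℕ}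

section TwistedShift

variable (B : Matrix (Fin r) (Fin r) ℤ)

noncomputable def twistedShift (a : Fin r → ℤ) : Module.End R ((Fin r → ℤ) →₀ R) :=
  Finsupp.lift _ R _ fun k => Finsupp.single (a + k) ((sqq ^ (a ⬝ᵥ B *ᵥ k) : Rˣ) : R)

theorem twistedShift_single (a k : Fin r → ℤ) (b : R) :
    twistedShift sqq B a (Finsupp.single k b)
      = sqq ^ (a ⬝ᵥ B *ᵥ k) • Finsupp.single (a + k) b := by
  simp [twistedShift, Units.smul_def, mul_comm]

theorem twistedShift_zero : twistedShift sqq B 0 = 1 :=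
  Finsupp.lhom_ext fun k b => by simp [twistedShift_single]

theorem twistedShift_mul (a b : Fin r → ℤ) :
    twistedShift sqq B a * twistedShift sqq B b
      = sqq ^ (a ⬝ᵥ B *ᵥ b) • twistedShift sqq B (a + b) :=
  Finsupp.lhom_ext fun k c => by
    simp only [Module.End.mul_apply, LinearMap.smul_apply, twistedShift_single, Units.smul_def,
      map_smul, smul_smul, ← Units.val_mul, ← zpow_add]
    rw [← add_assoc, add_comm a b, Matrix.mulVec_add, dotProduct_add, add_dotProduct]
    congr 3
    ring

theorem twistedShift_mul_of_dotProduct_eq_zero {a b : Fin r → ℤ} (h : a ⬝ᵥ B *ᵥ b = 0) :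
    twistedShift sqq B a * twistedShift sqq B b = twistedShift sqq B (a + b) := by
  rw [twistedShift_mul, h, zpow_zero, one_smul]

noncomputable def twistedShiftUnit (a : Fin r → ℤ) (ha : a ⬝ᵥ B *ᵥ a = 0) :
    (Module.End R ((Fin r → ℤ) →₀ R))ˣ where
  val := twistedShift sqq B a
  inv := twistedShift sqq B (-a)
  val_inv := by
    rw [twistedShift_mul_of_dotProduct_eq_zero sqq B
      (by rw [Matrix.mulVec_neg, dotProduct_neg, ha, neg_zero]), add_neg_cancel, twistedShift_zero]
  inv_val := by
    rw [twistedShift_mul_of_dotProduct_eq_zero sqq B (by rw [neg_dotProduct, ha, neg_zero]),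
      neg_add_cancel, twistedShift_zero]

theorem val_twistedShiftUnit (a : Fin r → ℤ) (ha : a ⬝ᵥ B *ᵥ a = 0) :
    ↑(twistedShiftUnit sqq B a ha) = twistedShift sqq B a :=
  rfl

theorem val_twistedShiftUnit_zpow (a : Fin r → ℤ) (ha : a ⬝ᵥ B *ᵥ a = 0) (n : ℤ) :
    ↑(twistedShiftUnit sqq B a ha ^ n) = twistedShift sqq B (n • a) := by
  induction n using Int.induction_on with
  | zero => rw [zpow_zero, zero_smul, twistedShift_zero, Units.val_one]
  | succ n ih =>
    rw [zpow_add_one, Units.val_mul, ih, val_twistedShiftUnit,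
      twistedShift_mul_of_dotProduct_eq_zero sqq B (by rw [smul_dotProduct, ha, smul_zero]),
      add_smul, one_smul]
  | pred n ih =>
    rw [zpow_sub_one, Units.val_mul, ih]
    change twistedShift sqq B _ * twistedShift sqq B (-a) = _
    rw [twistedShift_mul_of_dotProduct_eq_zero sqq B
      (by rw [smul_dotProduct, Matrix.mulVec_neg, dotProduct_neg, ha, neg_zero, smul_zero]),
      sub_smul, one_smul, sub_eq_add_neg]

end TwistedShift

variable (Q : Matrix (Fin r) (Fin r) ℤ)

theorem X_mul_Xinv (i : Fin r) : X sqq Q i * Xinv sqq Q i = 1 := by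
  have := RingQuot.mkAlgHom_rel R (QTRel.mul_inv (sqq := sqq) (Q := Q) i)
  rwa [map_mul, map_one] at this

theorem Xinv_mul_X (i : Fin r) : Xinv sqq Q i * X sqq Q i = 1 := by
  have := RingQuot.mkAlgHom_rel R (QTRel.inv_mul (sqq := sqq) (Q := Q) i)
  rwa [map_mul, map_one] at this

theorem X_mul_X (i j : Fin r) :
    X sqq Q i * X sqq Q j = sqq ^ (2 * Q i j) • (X sqq Q j * X sqq Q i) := by
  have := RingQuot.mkAlgHom_rel R (QTRel.qcomm (sqq := sqq) (Q := Q) i j)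
  rwa [map_mul, map_smul, map_mul] at this

noncomputable def unitX (i : Fin r) : (QuantumTorus R sqq Q)ˣ :=
  ⟨X sqq Q i, Xinv sqq Q i, X_mul_Xinv sqq Q i, Xinv_mul_X sqq Q i⟩

theorem X_eq_unitX_zpow (i : Fin r) : X sqq Q i = ↑(unitX sqq Q i ^ (1 : ℤ)) := by
  simp [unitX]

theorem Xinv_eq_unitX_zpow (i : Fin r) : Xinv sqq Q i = ↑(unitX sqq Q i ^ (-1 : ℤ)) := by
  simp [unitX]

theorem unitX_zpow_mul_unitX_zpow (i j : Fin r) (m n : ℤ) :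
    ((unitX sqq Q i ^ m : (QuantumTorus R sqq Q)ˣ) : QuantumTorus R sqq Q) * ↑(unitX sqq Q j ^ n)
      = sqq ^ (2 * Q i j * (m * n)) • (↑(unitX sqq Q j ^ n) * ↑(unitX sqq Q i ^ m)) := by
  rw [Units.val_zpow_mul_val_zpow_of_mul_eq_smul (X_mul_X sqq Q i j), ← zpow_mul]

@[elab_as_elim]
theorem induction_on {P : QuantumTorus R sqq Q → Prop} (z : QuantumTorus R sqq Q)
    (h_algebraMap : ∀ c, P (algebraMap R _ c)) (h_X : ∀ i, P (X sqq Q i))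
    (h_Xinv : ∀ i, P (Xinv sqq Q i)) (h_add : ∀ x y, P x → P y → P (x + y))
    (h_mul : ∀ x y, P x → P y → P (x * y)) : P z := by
  obtain ⟨y, rfl⟩ := RingQuot.mkAlgHom_surjective R (QTRel R sqq Q) z
  induction y using FreeAlgebra.induction with
  | grade0 c => rw [AlgHom.commutes]; exact h_algebraMap c
  | grade1 s => cases s with
    | inl i => exact h_X i
    | inr i => exact h_Xinv i
  | mul a b ha hb => rw [map_mul]; exact h_mul _ _ ha hb
  | add a b ha hb => rw [map_add]; exact h_add _ _ ha hb

section Lift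

variable {A : Type*} [Ring A] [Algebra R A] (u : Fin r → Aˣ)

noncomputable def lift (hu : ∀ i j, (u i : A) * u j = sqq ^ (2 * Q i j) • ((u j : A) * u i)) :
    QuantumTorus R sqq Q →ₐ[R] A :=
  RingQuot.liftAlgHom R ⟨FreeAlgebra.lift R (Sum.elim (fun i => (u i : A)) fun i => ↑(u i)⁻¹),
    by
      rintro _ _ (i | i | ⟨i, j⟩) <;>
        simp only [map_mul, map_one, map_smul, FreeAlgebra.lift_ι_apply, Sum.elim_inl,
          Sum.elim_inr]
      · exact (u i).mul_inv
      · exact (u i).inv_mul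
      · rw [hu, Units.smul_def]⟩

theorem lift_X (hu : ∀ i j, (u i : A) * u j = sqq ^ (2 * Q i j) • ((u j : A) * u i))
    (i : Fin r) : lift sqq Q u hu (X sqq Q i) = u i :=
  (RingQuot.liftAlgHom_mkAlgHom_apply R _ _ _).trans (FreeAlgebra.lift_ι_apply _ _)

theorem lift_unitX_zpow (hu : ∀ i j, (u i : A) * u j = sqq ^ (2 * Q i j) • ((u j : A) * u i))
    (i : Fin r) (n : ℤ) : lift sqq Q u hu ↑(unitX sqq Q i ^ n) = ↑(u i ^ n) := by
  have h : Units.map (lift sqq Q u hu).toMonoidHom (unitX sqq Q i) = u i :=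
    Units.ext (lift_X sqq Q u hu i)
  rw [← h, ← map_zpow]
  rfl

end Lift

noncomputable def listMonomial (l : List (Fin r)) (k : Fin r → ℤ) : (QuantumTorus R sqq Q)ˣ :=
  (l.map fun j => unitX sqq Q j ^ k j).prod

noncomputable def orderedMonomial (k : Fin r → ℤ) : (QuantumTorus R sqq Q)ˣ :=
  listMonomial sqq Q (List.finRange r) k

theorem listMonomial_cons (j : Fin r) (l : List (Fin r)) (k : Fin r → ℤ) :
    listMonomial sqq Q (j :: l) k = unitX sqq Q j ^ k j * listMonomial sqq Q l k :=
  List.prod_cons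

theorem listMonomial_congr {l : List (Fin r)} {k k' : Fin r → ℤ} (h : ∀ j ∈ l, k j = k' j) :
    listMonomial sqq Q l k = listMonomial sqq Q l k' :=
  congrArg List.prod (List.map_congr_left fun j hj => by rw [h j hj])

theorem orderedMonomial_zero : orderedMonomial sqq Q 0 = 1 := by
  simp [orderedMonomial, listMonomial]

theorem unitX_zpow_mul_listMonomial (i : Fin r) (e : ℤ) (k : Fin r → ℤ) {l : List (Fin r)}
    (hl : l.Nodup) (hi : i ∈ l) : ∃ c : ℤ,
      ((unitX sqq Q i ^ e * listMonomial sqq Q l k : (QuantumTorus R sqq Q)ˣ) :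
        QuantumTorus R sqq Q) = sqq ^ c • ↑(listMonomial sqq Q l (k + Pi.single i e)) := by
  induction l with
  | nil => simp at hi
  | cons j t ih =>
    obtain ⟨hjt, ht⟩ := List.nodup_cons.mp hl
    rw [listMonomial_cons, listMonomial_cons]
    by_cases hij : i = j
    · subst hij
      have hagree : ∀ j ∈ t, k j = (k + Pi.single i e : Fin r → ℤ) j := fun j hj => by
        simp [show j ≠ i from fun h => hjt (h ▸ hj)]
      refine ⟨0, ?_⟩
      rw [zpow_zero, one_smul, ← mul_assoc, ← zpow_add, ← listMonomial_congr sqq Q hagree]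
      simp [add_comm]
    · obtain ⟨c, hc⟩ := ih ht ((List.mem_cons.mp hi).resolve_left hij)
      have hkj : (k + Pi.single i e : Fin r → ℤ) j = k j := by simp [Ne.symm hij]
      refine ⟨2 * Q i j * (e * k j) + c, ?_⟩
      calc ((unitX sqq Q i ^ e * (unitX sqq Q j ^ k j * listMonomial sqq Q t k) :
              (QuantumTorus R sqq Q)ˣ) : QuantumTorus R sqq Q)
          = ↑(unitX sqq Q i ^ e) * ↑(unitX sqq Q j ^ k j) * ↑(listMonomial sqq Q t k) := by
            simp only [Units.val_mul, mul_assoc]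
        _ = sqq ^ (2 * Q i j * (e * k j)) •
              (↑(unitX sqq Q j ^ k j) * ↑(unitX sqq Q i ^ e * listMonomial sqq Q t k)) := by
            rw [unitX_zpow_mul_unitX_zpow, smul_mul_assoc]
            simp only [Units.val_mul, mul_assoc]
        _ = _ := by
            rw [hc, mul_smul_comm, smul_smul, ← zpow_add, hkj, Units.val_mul]

theorem span_orderedMonomial :
    Submodule.span R (Set.range fun k => (orderedMonomial sqq Q k : QuantumTorus R sqq Q))
      = ⊤ := by
  set S := Submodule.span R (Set.range fun k => (orderedMonomial sqq Q k : QuantumTorus R sqq Q))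
  have unitX_zpow_mul_mem (i : Fin r) (e : ℤ) :
      S ≤ S.comap (LinearMap.mulLeft R (unitX sqq Q i ^ e : (QuantumTorus R sqq Q)ˣ).val) := by
    refine Submodule.span_le.mpr (Set.range_subset_iff.mpr fun k => ?_)
    obtain ⟨c, hc⟩ := unitX_zpow_mul_listMonomial sqq Q i e k (List.nodup_finRange r)
      (List.mem_finRange i)
    change _ * _ ∈ S
    rw [← Units.val_mul, orderedMonomial, hc]
    exact S.smul_mem _ (Submodule.subset_span ⟨_, rfl⟩)
  have mul_mem (z : QuantumTorus R sqq Q) : S ≤ S.comap (LinearMap.mulLeft R z) := by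
    refine induction_on sqq Q z (fun c y hy => ?_) (fun i => ?_) (fun i => ?_)
      (fun x y hx hy w hw => ?_) (fun x y hx hy w hw => ?_)
    · simpa [Algebra.smul_def] using S.smul_mem c hy
    · rw [X_eq_unitX_zpow]; exact unitX_zpow_mul_mem i 1
    · rw [Xinv_eq_unitX_zpow]; exact unitX_zpow_mul_mem i (-1)
    · simpa [add_mul] using S.add_mem (hx hw) (hy hw)
    · simpa [mul_assoc] using hx (hy hw)
  refine eq_top_iff.mpr fun z _ => ?_
  simpa [orderedMonomial_zero] using mul_mem z (Submodule.subset_span ⟨0, rfl⟩)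

def twistMatrix : Matrix (Fin r) (Fin r) ℤ := Matrix.of fun i j => if j < i then 2 * Q i j else 0

theorem twistMatrix_apply (i j : Fin r) :
    twistMatrix Q i j = if j < i then 2 * Q i j else 0 :=
  rfl

theorem single_dotProduct_twistMatrix_mulVec_single (i j : Fin r) :
    Pi.single i 1 ⬝ᵥ twistMatrix Q *ᵥ Pi.single j 1 = twistMatrix Q i j := by
  simp

theorem twistMatrix_apply_eq_add (hQ : Qᵀ = -Q) (i j : Fin r) :
    twistMatrix Q i j = 2 * Q i j + twistMatrix Q j i := by
  have hji : Q j i = -Q i j := by simpa using congrFun (congrFun hQ i) j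
  rcases lt_trichotomy i j with h | rfl | h
  · simp [twistMatrix, h, h.not_gt, hji]
  · simp [twistMatrix, show Q i i = 0 by linarith]
  · simp [twistMatrix, h, h.not_gt]

theorem twistMatrix_mulVec_apply_eq_zero {v : Fin r → ℤ} {i : Fin r} (hv : ∀ j < i, v j = 0) :
    (twistMatrix Q *ᵥ v) i = 0 := by
  simp only [Matrix.mulVec, dotProduct]
  exact Finset.sum_eq_zero fun j _ => by
    by_cases h : j < i
    · rw [hv j h, mul_zero]
    · rw [twistMatrix_apply, if_neg h, zero_mul]

noncomputable def shiftRep (hQ : Qᵀ = -Q) :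
    QuantumTorus R sqq Q →ₐ[R] Module.End R ((Fin r → ℤ) →₀ R) :=
  lift (A := Module.End R ((Fin r → ℤ) →₀ R)) sqq Q
    (fun i => twistedShiftUnit sqq (twistMatrix Q) (Pi.single i 1) (by simp [twistMatrix_apply]))
    fun i j => by
      simp only [val_twistedShiftUnit]
      rw [twistedShift_mul, twistedShift_mul, smul_smul, ← zpow_add, add_comm (Pi.single j 1),
        single_dotProduct_twistMatrix_mulVec_single, single_dotProduct_twistMatrix_mulVec_single,
        twistMatrix_apply_eq_add Q hQ]

theorem shiftRep_unitX_zpow (hQ : Qᵀ = -Q) (i : Fin r) (n : ℤ) :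
    shiftRep sqq Q hQ ↑(unitX sqq Q i ^ n)
      = twistedShift sqq (twistMatrix Q) (n • Pi.single i 1) := by
  rw [shiftRep, lift_unitX_zpow, val_twistedShiftUnit_zpow]

theorem shiftRep_listMonomial (hQ : Qᵀ = -Q) (k : Fin r → ℤ) {l : List (Fin r)}
    (hl : l.Pairwise (· < ·)) :
    shiftRep sqq Q hQ ↑(listMonomial sqq Q l k)
      = twistedShift sqq (twistMatrix Q) (fun j => if j ∈ l then k j else 0) := by
  induction l with
  | nil =>
    simp only [listMonomial, List.map_nil, List.prod_nil, Units.val_one, map_one,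
      List.not_mem_nil, if_false]
    exact (twistedShift_zero sqq (twistMatrix Q)).symm
  | cons j t ih =>
    obtain ⟨hjt, ht⟩ := List.pairwise_cons.mp hl
    rw [listMonomial_cons, Units.val_mul, map_mul, ih ht, shiftRep_unitX_zpow,
      twistedShift_mul_of_dotProduct_eq_zero]
    · congr 1
      funext j'
      by_cases h : j' = j
      · subst h
        have : j' ∉ t := fun h => lt_irrefl _ (hjt j' h)
        simp [this]
      · simp [h]
    · rw [smul_dotProduct, single_dotProduct, one_mul, twistMatrix_mulVec_apply_eq_zero Q,
        smul_zero]
      intro j' hj'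
      have : j' ∉ t := fun h => lt_asymm hj' (hjt j' h)
      simp [this]

theorem shiftRep_orderedMonomial (hQ : Qᵀ = -Q) (k : Fin r → ℤ) :
    shiftRep sqq Q hQ ↑(orderedMonomial sqq Q k) = twistedShift sqq (twistMatrix Q) k := by
  rw [orderedMonomial, shiftRep_listMonomial sqq Q hQ k (List.sortedLT_finRange r).pairwise]
  simp

theorem linearIndependent_orderedMonomial (hQ : Qᵀ = -Q) :
    LinearIndependent R fun k => (orderedMonomial sqq Q k : QuantumTorus R sqq Q) := by
  refine LinearIndependent.of_comp
    ((LinearMap.applyₗ (Finsupp.single 0 1)).comp (shiftRep sqq Q hQ).toLinearMap) ?_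
  convert Finsupp.linearIndependent_single_one R (Fin r → ℤ) using 1
  funext k
  simp [shiftRep_orderedMonomial, twistedShift_single]

section Frobenius

variable (n : ℤ)

noncomputable def frobenius : QuantumTorus R sqq (n ^ 2 • Q) →ₐ[R] QuantumTorus R sqq Q :=
  lift sqq (n ^ 2 • Q) (fun i => unitX sqq Q i ^ n) fun i j => by
    rw [unitX_zpow_mul_unitX_zpow, Matrix.smul_apply, smul_eq_mul]
    congr 2
    ring

theorem frobenius_X (i : Fin r) :
    frobenius sqq Q n (X sqq (n ^ 2 • Q) i) = ↑(unitX sqq Q i ^ n) :=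
  lift_X _ _ _ _ i

theorem frobenius_listMonomial (l : List (Fin r)) (k : Fin r → ℤ) :
    frobenius sqq Q n ↑(listMonomial sqq (n ^ 2 • Q) l k)
      = ↑(listMonomial sqq Q l (n • k)) := by
  induction l with
  | nil => simp [listMonomial]
  | cons j t ih =>
    rw [listMonomial_cons, listMonomial_cons, Units.val_mul, map_mul, ih, frobenius,
      lift_unitX_zpow, ← zpow_mul, Units.val_mul]
    rfl

theorem frobenius_injective (hQ : Qᵀ = -Q) (hn : n ≠ 0) :
    Function.Injective (frobenius sqq Q n) := by
  refine LinearMap.injective_of_linearIndependent (f := (frobenius sqq Q n).toLinearMap)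
    (span_orderedMonomial sqq (n ^ 2 • Q)) ?_
  have : (frobenius sqq Q n).toLinearMap ∘ (fun k => ↑(orderedMonomial sqq (n ^ 2 • Q) k))
      = (fun k => ↑(orderedMonomial sqq Q k)) ∘ (n • ·) :=
    funext (frobenius_listMonomial sqq Q n _)
  rw [this]
  exact (linearIndependent_orderedMonomial sqq Q hQ).comp _ (smul_right_injective _ hn)

end Frobenius

end QuantumTorus

/-- For a positive integer `N` there is an injective `R`-algebra
homomorphism `Φ_N : T(N²Q) → T(Q)`, the `N`-th Frobenius homomorphism, determined by
`Φ_N(x_i) = x_i^N`. -/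
theorem quantumTorus_frobenius (R : Type) [CommRing R] (sqq : Rˣ)
    {r : ℕ} (Q : Matrix (Fin r) (Fin r) ℤ) (hQ : Qᵀ = -Q) (N : ℕ) (hN : 0 < N) :
    ∃ Φ : QuantumTorus R sqq (((N : ℤ) ^ 2) • Q) →ₐ[R] QuantumTorus R sqq Q,
      Function.Injective Φ ∧
        ∀ i : Fin r, Φ (QuantumTorus.X sqq (((N : ℤ) ^ 2) • Q) i) =
          QuantumTorus.X sqq Q i ^ N := by
  refine ⟨QuantumTorus.frobenius sqq Q N,
    QuantumTorus.frobenius_injective sqq Q N hQ (by exact_mod_cast hN.ne'), fun i => ?_⟩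
  rw [QuantumTorus.frobenius_X, zpow_natCast, Units.val_pow_eq_pow_val]
  rfl
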